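/- The 4×4 matrix B = [[0, I₂],[ω²I₂ + L, 2ωJ]], with J = [[0,1],[−1,0]], ω² = √2/16 + 1/32, and L = diag(λ₆, λ₆) where λ₆ = √2/16, has the four eigenvalues ±2^{1/4}/4 ± i√(2+4√2)/8; in particular B has eigenvalues with nonzero real part. -/

import Mathlib

open Matrix Polynomial

/-- The angular velocity `ω` of the square relative equilibrium: `ω² = √2/16 + 1/32`. -/
noncomputable def ω : ℝ := Real.sqrt (Real.sqrt 2/16 + 1/32)

/-- The standard symplectic `2 × 2` rotation matrix `J`. -/
noncomputable def Jmat : Matrix (Fin 2) (Fin 2) ℂ := !![0, 1; -1, 0]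

/-- The eigenvalue `λ₆ = √2/16` of the potential Hessian at the square configuration. -/
noncomputable def lam6 : ℝ := Real.sqrt 2/16

/-- The linearization matrix `B = [[0, I₂], [ω² I₂ + L, 2ω J]]` with `L = diag (λ₆, λ₆)`. -/
noncomputable def Bsq : Matrix (Fin 2 ⊕ Fin 2) (Fin 2 ⊕ Fin 2) ℂ :=
  Matrix.fromBlocks 0 1 (((ω : ℂ)^2 + (lam6 : ℂ)) • (1 : Matrix (Fin 2) (Fin 2) ℂ))
    ((2 * (ω : ℂ)) • Jmat)

/-!
For `B = [[0, 1], [(ω² + λ) • 1, 2ω • J]]` an eigenvector `(y, μy)` needs `y` to be an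
eigenvector of `J`, say `Jy = ±iy`, and then `μ² ∓ 2iωμ - (ω² + λ) = (μ ∓ iω)² - λ = 0`.
So the eigenvalues are `±√λ ± iω`; here `√λ₆ = 2^{1/4}/4` and `ω = √(2 + 4√2)/8`.
-/

section
variable {R : Type*} [CommRing R]

theorem reindex_fromBlocks_rotation (a b : R) :
    reindex finSumFinEquiv finSumFinEquiv
        (fromBlocks 0 1 (a • 1) (b • !![0, 1; -1, 0]) : Matrix (Fin 2 ⊕ Fin 2) (Fin 2 ⊕ Fin 2) R)
      = !![0, 0, 1, 0; 0, 0, 0, 1; a, 0, 0, b; 0, a, -b, 0] := by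
  ext i j
  fin_cases i <;> fin_cases j <;>
    simp [finSumFinEquiv, Fin.addCases, Fin.subNat, Fin.castLT, one_apply]

theorem charpoly_fromBlocks_rotation (a b : R) :
    (fromBlocks 0 1 (a • 1) (b • !![0, 1; -1, 0]) :
        Matrix (Fin 2 ⊕ Fin 2) (Fin 2 ⊕ Fin 2) R).charpoly
      = X ^ 4 + C (b ^ 2 - 2 * a) * X ^ 2 + C (a ^ 2) := by
  rw [← charpoly_reindex finSumFinEquiv, reindex_fromBlocks_rotation]
  simp [Matrix.charpoly, det_succ_row_zero, Fin.sum_univ_succ, charmatrix_apply, Fin.succAbove,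
    map_ofNat]
  ring

theorem charpoly_fromBlocks_rotation_eq_prod {i : R} (hi : i ^ 2 = -1) (s w : R) :
    (fromBlocks 0 1 ((w ^ 2 + s ^ 2) • 1) ((2 * w) • !![0, 1; -1, 0]) :
        Matrix (Fin 2 ⊕ Fin 2) (Fin 2 ⊕ Fin 2) R).charpoly
      = (X - C (s + i * w)) * (X - C (s - i * w)) * (X - C (-s + i * w)) *
          (X - C (-s - i * w)) := by
  have hCi : C i ^ 2 = -1 := by rw [← C_pow, hi, C_neg, C_1]
  rw [charpoly_fromBlocks_rotation]
  simp only [map_sub, map_add, map_neg, map_mul, map_pow, C_ofNat]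
  linear_combination
    (2 * X ^ 2 * C w ^ 2 + 2 * C w ^ 2 * C s ^ 2 + C w ^ 4 * (1 - C i ^ 2)) * hCi

end

theorem ω_eq : ω = √(2 + 4 * √2) / 8 := by
  rw [ω, Real.sqrt_eq_iff_mul_self_eq (by positivity) (by positivity), div_mul_div_comm,
    Real.mul_self_sqrt (by positivity)]
  ring

theorem lam6_eq : lam6 = (√√2 / 4) ^ 2 := by
  rw [lam6, div_pow, Real.sq_sqrt (Real.sqrt_nonneg 2)]
  norm_num

/-- The `4 × 4` linearization matrix `B` of the square relative equilibrium along the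
eigenspace of `λ₆ = √2/16` has the four eigenvalues `± 2^{1/4}/4 ± i √(2 + 4√2)/8`;
in particular `B` has eigenvalues with nonzero real part. -/
theorem Bsq_eigenvalues :
    Bsq.charpoly =
      (X - C (((Real.sqrt (Real.sqrt 2) : ℝ) : ℂ)/4
          + Complex.I * ((Real.sqrt (2 + 4*Real.sqrt 2) : ℝ) : ℂ)/8)) *
      (X - C (((Real.sqrt (Real.sqrt 2) : ℝ) : ℂ)/4
          - Complex.I * ((Real.sqrt (2 + 4*Real.sqrt 2) : ℝ) : ℂ)/8)) *
      (X - C (-((Real.sqrt (Real.sqrt 2) : ℝ) : ℂ)/4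
          + Complex.I * ((Real.sqrt (2 + 4*Real.sqrt 2) : ℝ) : ℂ)/8)) *
      (X - C (-((Real.sqrt (Real.sqrt 2) : ℝ) : ℂ)/4
          - Complex.I * ((Real.sqrt (2 + 4*Real.sqrt 2) : ℝ) : ℂ)/8)) ∧
    ∃ μ ∈ spectrum ℂ Bsq, μ.re ≠ 0 := by
  set s : ℂ := ((√√2 : ℝ) : ℂ) / 4
  set w : ℂ := ((√(2 + 4 * √2) : ℝ) : ℂ) / 8
  have hchar : Bsq.charpoly = (X - C (s + Complex.I * w)) * (X - C (s - Complex.I * w)) *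
      (X - C (-s + Complex.I * w)) * (X - C (-s - Complex.I * w)) := by
    rw [← charpoly_fromBlocks_rotation_eq_prod Complex.I_sq, Bsq, Jmat, ω_eq, lam6_eq]
    congr 4 <;> push_cast <;> ring
  refine ⟨by simpa only [s, w, mul_div_assoc, neg_div] using hchar, s + Complex.I * w, ?_, ?_⟩
  · exact mem_spectrum_of_isRoot_charpoly (by simp [hchar])
  · simp [s, w]
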